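/- Let v : [0,∞) × [0,L] → ℝ³ be a smooth solution of ∂v/∂t = ν v_xx + r × v_xx + k(v × r) - kν r × (v × r) with Neumann boundary conditions v_x(0,t) = v_x(L,t) = 0, where ν ≥ 0, k > 0, r ∈ ℝ³ constant. Then V(t) = ½‖v(·,t) - r‖²_{L²} satisfies dV/dt = -ν‖v_x‖²_{L²} - kν‖(v - r) × r‖²_{L²} ≤ 0. -/

import Mathlib

/-!
Differentiating under the integral sign, `V' = ∫ (v - r) ⬝ᵥ v_t`. After substituting the equation,
the reaction terms contribute `-kν |(v - r) ⨯₃ r|²` pointwise, because `v ⨯₃ r = (v - r) ⨯₃ r`.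
The diffusion terms are the `x`-derivative of the flux `(v - r) ⬝ᵥ (ν v_x + r ⨯₃ v_x)` minus
`ν |v_x|²`, and the flux vanishes at both ends by the Neumann condition.
-/

open Matrix Filter Function Set intervalIntegral

theorem sub_dotProduct_pde_rhs {R : Type*} [CommRing R] (ν k : R) (r v w : Fin 3 → R) :
    (v - r) ⬝ᵥ (ν • w + r ⨯₃ w + k • (v ⨯₃ r) - (k * ν) • (r ⨯₃ (v ⨯₃ r))) =
      (v - r) ⬝ᵥ (ν • w + r ⨯₃ w) - k * ν * (((v - r) ⨯₃ r) ⬝ᵥ ((v - r) ⨯₃ r)) := by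
  have hcross : v ⨯₃ r = (v - r) ⨯₃ r := by
    rw [LinearMap.map_sub₂, cross_self, sub_zero]
  rw [hcross, dotProduct_sub, dotProduct_add, dotProduct_smul, dotProduct_smul, dot_self_cross,
    triple_product_permutation (v - r), triple_product_permutation r, smul_eq_mul, smul_eq_mul]
  ring

@[fun_prop]
theorem Continuous.crossProduct {α R : Type*} [TopologicalSpace α] [TopologicalSpace R]
    [CommRing R] [IsTopologicalRing R] {f g : α → Fin 3 → R} (hf : Continuous f)
    (hg : Continuous g) : Continuous fun x => f x ⨯₃ g x := by
  refine continuous_pi fun i => ?_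
  fin_cases i <;> simp <;> fun_prop

theorem HasDerivAt.dotProduct {n 𝕜 : Type*} [Fintype n] [NontriviallyNormedField 𝕜]
    {f g : 𝕜 → n → 𝕜} {f' g' : n → 𝕜} {x : 𝕜} (hf : HasDerivAt f f' x)
    (hg : HasDerivAt g g' x) :
    HasDerivAt (fun y => f y ⬝ᵥ g y) (f' ⬝ᵥ g x + f x ⬝ᵥ g') x := by
  have hsum := HasDerivAt.fun_sum (u := Finset.univ) fun i _ =>
    (hasDerivAt_pi.1 hf i).fun_mul (hasDerivAt_pi.1 hg i)
  rwa [_root_.dotProduct, _root_.dotProduct, ← Finset.sum_add_distrib]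

theorem HasDerivAt.const_crossProduct {g : ℝ → Fin 3 → ℝ} {g' : Fin 3 → ℝ} {x : ℝ}
    (c : Fin 3 → ℝ) (hg : HasDerivAt g g' x) : HasDerivAt (fun y => c ⨯₃ g y) (c ⨯₃ g') x :=
  (crossProduct c).toContinuousLinearMap.hasFDerivAt.comp_hasDerivAt x hg

theorem hasDerivAt_intervalIntegral_of_continuous {E : Type*} [NormedAddCommGroup E]
    [NormedSpace ℝ E] {F F' : ℝ → ℝ → E} {a b : ℝ} (t : ℝ) (hF : Continuous (uncurry F))
    (hF' : Continuous (uncurry F')) (hderiv : ∀ s x, HasDerivAt (F · x) (F' s x) s) :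
    HasDerivAt (fun s => ∫ x in a..b, F s x) (∫ x in a..b, F' t x) t := by
  obtain ⟨C, hC⟩ := ((isCompact_closedBall t 1).prod isCompact_uIcc).exists_bound_of_continuousOn
    (hF'.continuousOn (s := Metric.closedBall t 1 ×ˢ uIcc a b))
  refine (hasDerivAt_integral_of_dominated_loc_of_deriv_le (bound := fun _ => C)
    (Metric.ball_mem_nhds t one_pos) ?_ ?_ ?_ ?_ intervalIntegrable_const ?_).2
  · exact Eventually.of_forall fun s => (hF.comp (Continuous.prodMk_right s)).aestronglyMeasurable
  · exact (hF.comp (Continuous.prodMk_right t)).intervalIntegrable a b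
  · exact (hF'.comp (Continuous.prodMk_right t)).aestronglyMeasurable
  · exact Eventually.of_forall fun x hx s hs =>
      hC (s, x) ⟨Metric.ball_subset_closedBall hs, uIoc_subset_uIcc hx⟩
  · exact Eventually.of_forall fun x _ s _ => hderiv s x

/-- Integration by parts against the flux `u ⬝ᵥ (ν • u' + c ⨯₃ u')`, which vanishes at both ends;
the cross-product part is Lemma 3 of the paper. -/
theorem integral_dotProduct_smul_add_crossProduct_of_neumann {u u' u'' : ℝ → Fin 3 → ℝ}
    {a b : ℝ} (ν : ℝ) (c : Fin 3 → ℝ) (hu : ∀ x, HasDerivAt u (u' x) x)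
    (hu' : ∀ x, HasDerivAt u' (u'' x) x) (hu''c : Continuous u'') (ha : u' a = 0)
    (hb : u' b = 0) :
    ∫ x in a..b, u x ⬝ᵥ (ν • u'' x + c ⨯₃ u'' x) = -(ν * ∫ x in a..b, u' x ⬝ᵥ u' x) := by
  have huc : Continuous u := continuous_iff_continuousAt.2 fun x => (hu x).continuousAt
  have hu'c : Continuous u' := continuous_iff_continuousAt.2 fun x => (hu' x).continuousAt
  have hflux : ∀ x, HasDerivAt (fun y => u y ⬝ᵥ (ν • u' y + c ⨯₃ u' y))
      (ν * (u' x ⬝ᵥ u' x) + u x ⬝ᵥ (ν • u'' x + c ⨯₃ u'' x)) x := fun x => by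
    refine ((hu x).dotProduct (((hu' x).const_smul ν).add
      ((hu' x).const_crossProduct c))).congr_deriv ?_
    simp only [Pi.add_apply, Pi.smul_apply, dotProduct_add, dotProduct_smul, dot_cross_self,
      smul_eq_mul, add_zero]
  have hint := integral_eq_sub_of_hasDerivAt (fun x _ => hflux x)
    (Continuous.intervalIntegrable (by fun_prop) a b)
  rw [integral_add (Continuous.intervalIntegrable (by fun_prop) a b)
    (Continuous.intervalIntegrable (by fun_prop) a b), integral_const_mul] at hint
  simp only [ha, hb, smul_zero, map_zero, add_zero, dotProduct_zero, sub_zero] at hint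
  linarith

/-- Lyapunov computation in Theorem 11 of the paper: for a smooth solution `v` of
`v_t = ν v_xx + r × v_xx + k(v × r) - kν r × (v × r)` with Neumann boundary
conditions, `V(t) = ½‖v(·,t) - r‖²_{L²}` satisfies
`V'(t) = -ν‖v_x‖² - kν‖(v - r) × r‖² ≤ 0`. -/
theorem stmt14 (L ν k : ℝ) (hL : 0 < L) (hν : 0 ≤ ν) (hk : 0 < k)
    (r : Fin 3 → ℝ) (v vt vx vxx : ℝ → ℝ → Fin 3 → ℝ)
    (hvt : ∀ t x, HasDerivAt (fun s => v s x) (vt t x) t)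
    (hvx : ∀ t x, HasDerivAt (fun y => v t y) (vx t x) x)
    (hvxx : ∀ t x, HasDerivAt (fun y => vx t y) (vxx t x) x)
    (hcont : Continuous fun p : ℝ × ℝ => (v p.1 p.2, vt p.1 p.2, vx p.1 p.2, vxx p.1 p.2))
    (hpde : ∀ t x, vt t x =
      ν • vxx t x + r ⨯₃ vxx t x + k • (v t x ⨯₃ r) - (k * ν) • (r ⨯₃ (v t x ⨯₃ r)))
    (hbc : ∀ t, vx t 0 = 0 ∧ vx t L = 0) :
    ∀ t : ℝ,
      HasDerivAt (fun s => (1 / 2) * ∫ x in (0:ℝ)..L, (v s x - r) ⬝ᵥ (v s x - r))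
        (-(ν * ∫ x in (0:ℝ)..L, vx t x ⬝ᵥ vx t x) -
          k * ν * ∫ x in (0:ℝ)..L, ((v t x - r) ⨯₃ r) ⬝ᵥ ((v t x - r) ⨯₃ r)) t ∧
      -(ν * ∫ x in (0:ℝ)..L, vx t x ⬝ᵥ vx t x) -
          k * ν * ∫ x in (0:ℝ)..L, ((v t x - r) ⨯₃ r) ⬝ᵥ ((v t x - r) ⨯₃ r) ≤ 0 := by
  intro t
  have hv : Continuous (uncurry v) := hcont.fst
  have hvt' : Continuous (uncurry vt) := hcont.snd.fst
  have hvxx_t : Continuous (vxx t) := hcont.snd.snd.snd.comp (Continuous.prodMk_right t)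
  have hV := hasDerivAt_intervalIntegral_of_continuous (a := 0) (b := L) t
    (F := fun s x => (v s x - r) ⬝ᵥ (v s x - r)) (F' := fun s x => 2 * ((v s x - r) ⬝ᵥ vt s x))
    (by fun_prop) (by fun_prop) fun s x => ((hvt s x).sub_const r).dotProduct ((hvt s x).sub_const r)
      |>.congr_deriv (by rw [dotProduct_comm]; ring)
  have hdissipation : ∫ x in (0:ℝ)..L, (v t x - r) ⬝ᵥ vt t x =
      -(ν * ∫ x in (0:ℝ)..L, vx t x ⬝ᵥ vx t x) -
        k * ν * ∫ x in (0:ℝ)..L, ((v t x - r) ⨯₃ r) ⬝ᵥ ((v t x - r) ⨯₃ r) := by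
    simp only [hpde, sub_dotProduct_pde_rhs]
    rw [integral_sub (Continuous.intervalIntegrable (by fun_prop) _ _)
      (Continuous.intervalIntegrable (by fun_prop) _ _), integral_const_mul,
      integral_dotProduct_smul_add_crossProduct_of_neumann ν r (fun x => (hvx t x).sub_const r)
        (hvxx t) hvxx_t (hbc t).1 (hbc t).2]
  have hsq_nonneg (w : ℝ → Fin 3 → ℝ) : 0 ≤ ∫ x in (0:ℝ)..L, w x ⬝ᵥ w x :=
    integral_nonneg hL.le fun x _ => by simpa using dotProduct_self_star_nonneg (w x)
  refine ⟨(hV.const_mul (1 / 2)).congr_deriv ?_, ?_⟩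
  · rw [integral_const_mul, hdissipation]
    ring
  · nlinarith [mul_nonneg hν (hsq_nonneg (vx t)),
      mul_nonneg (mul_nonneg hk.le hν) (hsq_nonneg fun x => (v t x - r) ⨯₃ r)]
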